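/- Let I be a set containing at least two elements and let (A_i)_{i∈I} be a family of commutative unitary rings such that at least two of the rings A_i (for two distinct indices) have characteristic zero. Then for every integer n ≥ 3 there exists an irreducible λ-quiddity of size n over the product ring ∏_{i∈I} A_i. -/

import Mathlib

/-- The matrix `[[a, -1], [1, 0]]`. -/
def mMat {A : Type*} [CommRing A] (a : A) : Matrix (Fin 2) (Fin 2) A := !![a, -1; 1, 0]

/-- `M_n(a₁, …, aₙ) = mMat aₙ * ⋯ * mMat a₁`, for the tuple given as a list `[a₁, …, aₙ]`. -/
def mProd {A : Type*} [CommRing A] (l : List A) : Matrix (Fin 2) (Fin 2) A :=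
  ((l.map mMat).reverse).prod

/-- The sum `(a₁,…,aₙ) ⊕ (b₁,…,b_m) = (a₁+b_m, a₂,…,a_{n−1}, aₙ+b₁, b₂,…,b_{m−1})`. -/
def oplus {A : Type*} [CommRing A] (a b : List A) : List A :=
  (a.headD 0 + b.getLastD 0) ::
    (a.dropLast.tail ++ (a.getLastD 0 + b.headD 0) :: b.dropLast.tail)

/-- Two tuples are equivalent if one is a cyclic rotation of the other or of its reversal. -/
def TupEquiv {A : Type*} (a b : List A) : Prop :=
  (∃ k, b = a.rotate k) ∨ (∃ k, b = a.reverse.rotate k)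

/-- A λ-quiddity over `R ⊆ A`: all entries lie in `R` and `M_n(a₁,…,aₙ) = ± Id`. -/
def IsQuiddity {A : Type*} [CommRing A] (R : Set A) (c : List A) : Prop :=
  (∀ x ∈ c, x ∈ R) ∧ (mProd c = 1 ∨ mProd c = -1)

/-- A λ-quiddity `c` over `R` is reducible if `c ∼ a ⊕ b` with `a ∈ R^m`, `m ≥ 3`,
and `b` a λ-quiddity over `R` of size `l ≥ 3`. -/
def IsReducible {A : Type*} [CommRing A] (R : Set A) (c : List A) : Prop :=
  ∃ a b : List A, 3 ≤ a.length ∧ 3 ≤ b.length ∧ (∀ x ∈ a, x ∈ R) ∧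
    IsQuiddity R b ∧ TupEquiv c (oplus a b)

/-- An irreducible λ-quiddity over `R`: a λ-quiddity of size `≥ 3` which is not reducible. -/
def IrreducibleQuiddity {A : Type*} [CommRing A] (R : Set A) (c : List A) : Prop :=
  IsQuiddity R c ∧ 3 ≤ c.length ∧ ¬ IsReducible R c

/-- The continuant `K_i(a₁,…,a_i)`, determinant of the tridiagonal matrix with diagonal
`a₁,…,a_i` and off-diagonal entries `1`; `K₀ = 1`. -/
def cont {A : Type*} [CommRing A] : List A → A
  | [] => 1
  | [a] => a
  | a :: b :: l => a * cont (b :: l) - cont l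

/-!
Over `ℤ`, `q = ((-2)^m, -1, -(m+1), -1)` is a λ-quiddity of size `m + 3` with monodromy
`(-1)^m`, which is central, so every rotation of `q` is one too. If `c ∼ a ⊕ (x, w, y)` with
`(x, w, y)` a λ-quiddity, then `cont w = ±1`, and `w` is a cyclic window of `c` of length between
`1` and `n - 3`. Such windows of `q` have continuant `±1` only if they end at its first `-1` or
start at its second one, and rotating `q` by `m + 2` moves all of these, so no window has
continuant `±1` in both `q` and its rotation. Over `∏ A i`, take `q` in every coordinate but
`i₁` and its rotation in coordinate `i₁`: as `A i₀` and `A i₁` have characteristic zero, the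
coordinates `i₀` and `i₁` see the integer continuants of both.
-/

section Continuant
variable {A B : Type*} [CommRing A] [CommRing B]

@[simp] lemma mProd_nil : mProd ([] : List A) = 1 := rfl

@[simp] lemma mProd_cons (x : A) (l : List A) : mProd (x :: l) = mProd l * mMat x := by
  simp [mProd]

lemma mProd_append (s t : List A) : mProd (s ++ t) = mProd t * mProd s := by
  simp [mProd]

lemma mProd_apply_zero_zero (l : List A) : mProd l 0 0 = cont l := by
  induction l using cont.induct with
  | case1 => rfl
  | case2 a => simp [mProd, mMat, cont]
  | case3 a b l ih ih' =>
    have h01 : mProd (b :: l) 0 1 = -cont l := by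
      rw [mProd_cons, Matrix.mul_apply, Fin.sum_univ_two, ih']
      simp [mMat]
    rw [mProd_cons, Matrix.mul_apply, Fin.sum_univ_two, ih, h01]
    simp [mMat, cont]
    ring

lemma mMat_map (φ : A →+* B) (x : A) : (mMat x).map φ = mMat (φ x) := by
  ext i j
  fin_cases i <;> fin_cases j <;> simp [mMat]

lemma mProd_map (φ : A →+* B) (l : List A) : mProd (l.map φ) = (mProd l).map φ := by
  induction l with
  | nil => simp [mProd]
  | cons x l ih => simp [ih, mMat_map, Matrix.map_mul]

lemma cont_map (φ : A →+* B) (l : List A) : cont (l.map φ) = φ (cont l) := by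
  induction l using cont.induct <;> simp_all [cont]

lemma det_mProd (l : List A) : (mProd l).det = 1 := by
  induction l with
  | nil => simp [mProd]
  | cons x l ih => simp [Matrix.det_mul, ih, mMat, Matrix.det_fin_two_of]

lemma mProd_rotate_of_commute (l : List A) (k : ℕ) (h : ∀ N, Commute (mProd l) N) :
    mProd (l.rotate k) = mProd l := by
  obtain ⟨s, t, rfl, hrot⟩ : ∃ s t, l = s ++ t ∧ l.rotate k = t ++ s :=
    ⟨_, _, (List.take_append_drop _ _).symm, List.rotate_eq_drop_append_take_mod⟩
  rw [hrot, mProd_append, mProd_append]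
  rw [mProd_append] at h
  have hs : IsUnit (mProd s) := by simp [Matrix.isUnit_iff_isUnit_det, det_mProd]
  rw [← hs.mul_left_inj, Matrix.mul_assoc, (h _).eq]

-- `mMat x` is conjugate to its transpose by `diag(1, -1)`.
lemma mProd_reverse (l : List A) :
    mProd l.reverse = !![1, 0; 0, -1] * (mProd l).transpose * !![1, 0; 0, -1] := by
  induction l with
  | nil => ext i j; fin_cases i <;> fin_cases j <;> simp [mProd]
  | cons x l ih =>
    rw [List.reverse_cons, mProd_append, ih]
    simp only [mProd_cons, mProd_nil, one_mul, Matrix.transpose_mul]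
    ext i j
    simp only [Matrix.mul_apply, Fin.sum_univ_two, Matrix.transpose_apply]
    fin_cases i <;> fin_cases j <;> simp [mMat, mul_comm, add_comm]

lemma cont_reverse (l : List A) : cont l.reverse = cont l := by
  rw [← mProd_apply_zero_zero, mProd_reverse, ← mProd_apply_zero_zero]
  simp only [Matrix.mul_apply, Fin.sum_univ_two, Matrix.transpose_apply]
  simp

lemma mProd_cons_append_singleton_one_one (x y : A) (w : List A) :
    mProd (x :: (w ++ [y])) 1 1 = -cont w := by
  rw [mProd_cons, mProd_append, ← mProd_apply_zero_zero]
  simp only [Matrix.mul_apply, Fin.sum_univ_two]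
  simp [mMat]

lemma cont_eq_one_or_neg_one_of_mProd_cons_append_singleton {x y : A} {w : List A}
    (h : mProd (x :: (w ++ [y])) = 1 ∨ mProd (x :: (w ++ [y])) = -1) :
    cont w = 1 ∨ cont w = -1 := by
  have h11 := mProd_cons_append_singleton_one_one x y w
  rcases h with h | h <;> simp [h] at h11
  · right; linear_combination h11
  · left; exact h11.symm

lemma oplus_cons_append_singleton (a w : List A) (x y : A) (ha : 2 ≤ a.length) :
    ∃ p, oplus a (x :: (w ++ [y])) = p ++ w ∧ p.length = a.length := by
  refine ⟨(a.headD 0 + y) :: (a.dropLast.tail ++ [a.getLastD 0 + x]), ?_, ?_⟩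
  · have hb : x :: (w ++ [y]) = (x :: w) ++ [y] := rfl
    rw [oplus, hb, List.getLastD_concat, List.dropLast_concat]
    simp
  · simp
    omega

lemma IsReducible.exists_isRotated_append {R : Set A} {c : List A} (h : IsReducible R c) :
    ∃ w q : List A, c ~r w ++ q ∧ 1 ≤ w.length ∧ 3 ≤ q.length ∧
      (cont w = 1 ∨ cont w = -1) := by
  obtain ⟨a, b, ha, hb, -, ⟨-, hbq⟩, hc⟩ := h
  obtain ⟨x, w, y, rfl⟩ : ∃ x w y, b = x :: (w ++ [y]) := by
    obtain _ | ⟨x, l⟩ := b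
    · simp at hb
    obtain rfl | ⟨w, y, rfl⟩ := l.eq_nil_or_concat'
    · simp at hb
    exact ⟨x, w, y, rfl⟩
  have hw : 1 ≤ w.length := by simp at hb; omega
  obtain ⟨p, hp, hpa⟩ := oplus_cons_append_singleton a w x y (by omega)
  have hcont := cont_eq_one_or_neg_one_of_mProd_cons_append_singleton hbq
  rw [hp] at hc
  rcases hc with ⟨k, hk⟩ | ⟨k, hk⟩
  · exact ⟨w, p, List.IsRotated.trans ⟨k, hk.symm⟩ List.isRotated_append, hw, by omega,
      hcont⟩
  · refine ⟨w.reverse, p.reverse, ?_, by simpa using hw, by simp; omega, ?_⟩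
    · simpa using List.IsRotated.reverse (l := c.reverse) ⟨k, hk.symm⟩
    · rwa [cont_reverse]

end Continuant

lemma List.rotate_replicate_append {α : Type*} (a : α) (l : List α) {m j : ℕ} (hj : j ≤ m) :
    (List.replicate m a ++ l).rotate j = List.replicate (m - j) a ++ l ++ List.replicate j a := by
  obtain ⟨k, rfl⟩ := Nat.exists_eq_add_of_le hj
  have h := List.rotate_append_length_eq (List.replicate j a) (List.replicate k a ++ l)
  rw [List.length_replicate] at h
  rw [List.replicate_add, List.append_assoc, h, Nat.add_sub_cancel_left, List.append_assoc]

lemma List.rotate_replicate_append_cons {α : Type*} (a x : α) (l : List α) (m : ℕ) :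
    (List.replicate m a ++ x :: l).rotate (m + 1) = l ++ List.replicate m a ++ [x] := by
  rw [← List.rotate_rotate, List.rotate_replicate_append _ _ le_rfl, Nat.sub_self,
    List.replicate_zero, List.nil_append, List.cons_append, List.rotate_cons_succ,
    List.rotate_zero]

def runQuiddity (m : ℕ) : List ℤ := List.replicate m (-2) ++ [-1, -(m + 1 : ℤ), -1]

lemma mProd_replicate_neg_two (p : ℕ) :
    mProd (List.replicate p (-2 : ℤ)) = (-1) ^ p • !![(p : ℤ) + 1, p; -p, 1 - p] := by
  induction p with
  | zero => simp [Matrix.one_fin_two]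
  | succ p ih =>
    rw [List.replicate_succ, mProd_cons, ih]
    ext i j
    simp only [Matrix.mul_apply, Fin.sum_univ_two]
    fin_cases i <;> fin_cases j <;> simp [mMat, pow_succ] <;> ring

lemma mProd_runQuiddity (m : ℕ) : mProd (runQuiddity m) = (-1) ^ m := by
  rw [runQuiddity, mProd_append, mProd_replicate_neg_two, ← neg_one_smul ℤ (1 : Matrix _ _ ℤ),
    smul_pow, one_pow]
  ext i j
  simp only [mProd_cons, mProd_nil, Matrix.mul_apply, Fin.sum_univ_two]
  fin_cases i <;> fin_cases j <;> simp [mMat, Matrix.one_apply] <;> ring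

lemma cont_replicate_neg_two (p : ℕ) :
    cont (List.replicate p (-2 : ℤ)) = (-1) ^ p * (p + 1) := by
  rw [← mProd_apply_zero_zero, mProd_replicate_neg_two]
  simp

lemma cont_replicate_neg_two_append_pair (m p : ℕ) :
    cont (List.replicate p (-2 : ℤ) ++ [-1, -(m + 1 : ℤ)]) = (-1) ^ p * (m - p) := by
  rw [← mProd_apply_zero_zero, mProd_append, mProd_replicate_neg_two]
  simp [Matrix.mul_apply, Fin.sum_univ_two, mMat]
  ring

lemma cont_replicate_neg_two_append_triple_append (m p q : ℕ) :
    cont (List.replicate p (-2 : ℤ) ++ [-1, -(m + 1 : ℤ), -1] ++ List.replicate q (-2 : ℤ)) =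
      (-1) ^ (p + q) * (p + q + 1 - m) := by
  rw [← mProd_apply_zero_zero, mProd_append, mProd_append, mProd_replicate_neg_two,
    mProd_replicate_neg_two]
  simp [Matrix.mul_apply, Fin.sum_univ_two, mMat]
  ring

lemma List.take_replicate_add_append {α : Type*} (a : α) (l : List α) (p i : ℕ) :
    (List.replicate p a ++ l).take (p + i) = List.replicate p a ++ l.take i := by
  simpa using List.take_length_add_append (l₁ := List.replicate p a) (l₂ := l) i

-- The `-1` entries of `runQuiddity m` sit at positions `m` and `m + 2`; the excluded windows,
-- those ending at the first or starting at the second, have continuant `±1`.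
lemma two_le_abs_cont_take_rotate_runQuiddity {m j L : ℕ} (hj : j < m + 3) (hL : 1 ≤ L)
    (hLm : L ≤ m) (hstart : j ≠ m + 2) (hend : j + L ≠ m + 1) :
    2 ≤ |cont (((runQuiddity m).rotate j).take L)| := by
  rcases (by omega : j ≤ m ∨ j = m + 1) with hj | rfl
  · rw [runQuiddity, List.rotate_replicate_append _ _ hj, List.append_assoc]
    rcases (by omega : L ≤ m - j ∨ L = m - j + 2 ∨ m - j + 3 ≤ L) with h | rfl | h
    · rw [List.take_append_of_le_length (by simpa), List.take_replicate, min_eq_left h,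
        cont_replicate_neg_two]
      simp [abs_mul, le_abs]
      omega
    · rw [List.take_replicate_add_append]
      have hw : ([-1, -(m + 1 : ℤ), -1] ++ List.replicate j (-2)).take 2 = [-1, -(m + 1 : ℤ)] :=
        rfl
      rw [hw, cont_replicate_neg_two_append_pair]
      simp [abs_mul, le_abs]
      omega
    · obtain ⟨q, rfl⟩ := Nat.exists_eq_add_of_le h
      have hw : ([-1, -(m + 1 : ℤ), -1] ++ List.replicate j (-2)).take (3 + q) =
          [-1, -(m + 1 : ℤ), -1] ++ List.replicate q (-2) := by
        rw [List.take_append, List.take_of_length_le (by simp), List.take_replicate,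
          min_eq_left (by simp; omega)]
        simp
      rw [add_assoc, List.take_replicate_add_append, hw, ← List.append_assoc,
        cont_replicate_neg_two_append_triple_append]
      simp [abs_mul, le_abs]
      omega
  · rw [runQuiddity, List.rotate_replicate_append_cons]
    rcases (by omega : L = 1 ∨ 2 ≤ L) with rfl | h
    · simp [le_abs, cont]
      omega
    · obtain ⟨k, rfl⟩ := Nat.exists_eq_add_of_le' h
      have hw : ([-(m + 1 : ℤ), -1] ++ List.replicate m (-2) ++ [-1]).take (k + 2) =
          (List.replicate k (-2 : ℤ) ++ [-1, -(m + 1 : ℤ)]).reverse := by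
        simp [List.take_append, List.take_replicate, min_eq_left (by omega : k ≤ m),
          Nat.sub_eq_zero_of_le (by omega : k ≤ m)]
      rw [hw, cont_reverse, cont_replicate_neg_two_append_pair]
      simp [abs_mul, le_abs]
      omega

lemma two_le_abs_cont_take_rotate_or (m j L : ℕ) (hL : 1 ≤ L) (hLm : L ≤ m) :
    2 ≤ |cont (((runQuiddity m).rotate j).take L)| ∨
      2 ≤ |cont ((((runQuiddity m).rotate (m + 2)).rotate j).take L)| := by
  have hlen : (runQuiddity m).length = m + 3 := by simp [runQuiddity]
  rw [← List.rotate_mod _ j, ← List.rotate_mod (List.rotate _ _) j, List.length_rotate, hlen,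
    List.rotate_rotate]
  have hj : j % (m + 3) < m + 3 := Nat.mod_lt j (by omega)
  generalize j % (m + 3) = i at hj ⊢
  rcases i with _ | i
  · exact .inl (two_le_abs_cont_take_rotate_runQuiddity hj hL hLm (by omega) (by omega))
  · rw [← List.rotate_mod _ (m + 2 + (i + 1)), hlen,
      show m + 2 + (i + 1) = i + 1 * (m + 3) by omega, Nat.add_mul_mod_self_right,
      Nat.mod_eq_of_lt (by omega)]
    by_cases h : i + L = m + 1
    · exact .inl (two_le_abs_cont_take_rotate_runQuiddity hj hL hLm (by omega) (by omega))
    · exact .inr (two_le_abs_cont_take_rotate_runQuiddity (by omega) hL hLm (by omega) h)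

section Product
variable {I : Type*} (A : I → Type*) [∀ i, CommRing (A i)] [DecidableEq I]

def mixAt (i₁ : I) (s t : List ℤ) : List (∀ i, A i) :=
  List.zipWith (fun x y i => if i = i₁ then (y : A i) else (x : A i)) s t

lemma map_eval_mixAt (i₁ i : I) {s t : List ℤ} (h : s.length = t.length) :
    (mixAt A i₁ s t).map (Pi.evalRingHom A i) =
      (if i = i₁ then t else s).map (Int.castRingHom (A i)) := by
  induction s generalizing t with
  | nil => cases t <;> simp_all [mixAt]
  | cons x s ih =>
    cases t with
    | nil => simp at h
    | cons y t =>
      have := ih (t := t) (by simpa using h)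
      simp only [mixAt] at this ⊢
      split_ifs at this ⊢ <;> simp_all

lemma mProd_mixAt (i₁ : I) {s t : List ℤ} (h : s.length = t.length)
    {M : Matrix (Fin 2) (Fin 2) ℤ} (hs : mProd s = M) (ht : mProd t = M) :
    mProd (mixAt A i₁ s t) = (Int.castRingHom (∀ i, A i)).mapMatrix M := by
  ext a b i
  have key := mProd_map (Pi.evalRingHom A i) (mixAt A i₁ s t)
  rw [map_eval_mixAt A i₁ i h, mProd_map, apply_ite mProd, hs, ht, ite_self] at key
  simpa using (congrFun (congrFun key a) b).symm

lemma exists_abs_cont_eq_one_of_isReducible_mixAt {i₀ i₁ : I} (hne : i₀ ≠ i₁)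
    [CharZero (A i₀)] [CharZero (A i₁)] {R : Set (∀ i, A i)} {s t : List ℤ}
    (h : s.length = t.length) (hred : IsReducible R (mixAt A i₁ s t)) :
    ∃ j L, 1 ≤ L ∧ L + 3 ≤ s.length ∧
      |cont ((s.rotate j).take L)| = 1 ∧ |cont ((t.rotate j).take L)| = 1 := by
  obtain ⟨w, q, ⟨j, hj⟩, hw, hq, hcont⟩ := hred.exists_isRotated_append
  have hlen := congrArg List.length hj
  simp only [List.length_rotate, mixAt, List.length_zipWith, List.length_append, ← h,
    min_self] at hlen
  have hcoord : ∀ i, ((cont (((if i = i₁ then t else s).rotate j).take w.length) : ℤ) : A i)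
      = cont w i := by
    intro i
    rw [← eq_intCast (Int.castRingHom (A i)), ← cont_map, List.map_take, List.map_rotate,
      ← map_eval_mixAt A i₁ i h, ← List.map_rotate, hj, ← List.map_take,
      List.take_left' rfl, cont_map]
    rfl
  have habs : ∀ i, CharZero (A i) →
      |cont (((if i = i₁ then t else s).rotate j).take w.length)| = 1 := by
    intro i _
    rw [abs_eq zero_le_one]
    rcases hcont with hc | hc
    · left; exact_mod_cast (hcoord i).trans (by simp [hc] : cont w i = 1)
    · right; exact_mod_cast (hcoord i).trans (by simp [hc] : cont w i = -1)
  refine ⟨j, w.length, hw, by omega, ?_, ?_⟩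
  · simpa [hne] using habs i₀ inferInstance
  · simpa using habs i₁ inferInstance

end Product

/-- If at least two of the rings `A i` (for distinct indices) have zero characteristic,
then for every `n ≥ 3` there is an irreducible λ-quiddity of size `n` over `∏ i, A i`. -/
theorem stmt9 {I : Type*} (A : I → Type*) [∀ i, CommRing (A i)]
    (i₀ i₁ : I) (hne : i₀ ≠ i₁)
    (h₀ : ringChar (A i₀) = 0) (h₁ : ringChar (A i₁) = 0)
    (n : ℕ) (hn : 3 ≤ n) :
    ∃ c : List (∀ i, A i), IrreducibleQuiddity Set.univ c ∧ c.length = n := by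
  classical
  have := ringChar.of_eq h₀
  have := ringChar.of_eq h₁
  have := CharP.charP_to_charZero (A i₀)
  have := CharP.charP_to_charZero (A i₁)
  obtain ⟨m, rfl⟩ : ∃ m, n = m + 3 := ⟨n - 3, by omega⟩
  have hlen : (runQuiddity m).length = ((runQuiddity m).rotate (m + 2)).length :=
    (List.length_rotate _ _).symm
  have hrot : mProd ((runQuiddity m).rotate (m + 2)) = (-1) ^ m := by
    have hcomm : ∀ N, Commute (mProd (runQuiddity m)) N := fun N =>
      mProd_runQuiddity m ▸ (Commute.neg_one_left N).pow_left m
    rw [mProd_rotate_of_commute _ _ hcomm, mProd_runQuiddity]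
  refine ⟨mixAt A i₁ (runQuiddity m) ((runQuiddity m).rotate (m + 2)),
    ⟨⟨fun _ _ => trivial, ?_⟩, ?_, ?_⟩, ?_⟩
  · rw [mProd_mixAt A i₁ hlen (mProd_runQuiddity m) hrot, map_pow, map_neg, map_one]
    exact neg_one_pow_eq_or _ m
  · simp [mixAt, runQuiddity]
  · intro hred
    obtain ⟨j, L, hL, hLm, hu, hv⟩ :=
      exists_abs_cont_eq_one_of_isReducible_mixAt A hne hlen hred
    rcases two_le_abs_cont_take_rotate_or m j L hL (by simp [runQuiddity] at hLm; omega)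
      with h | h <;> linarith
  · simp [mixAt, runQuiddity]
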